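/- arXiv:2109.03289 — 7 statements merged into one kernel-verified Lean document; each statement's English description precedes it below -/
import Mathlib

section
/- The 4×4 real matrix Q₁ = ![![0, -1, -3, 0], ![-1, 2, 9, 0], ![0, -1, -3, -1], ![0, 0, 0, 0]] has characteristic polynomial with complex roots exactly λ₁ = λ₂ = 0 (a double root), λ₃ = -1/2 + (√7/2)i, and λ₄ = -1/2 - (√7/2)i. -/
open Matrix Polynomial

/-
Cofactor expansion gives the characteristic polynomial `X ^ 2 * (X ^ 2 + X + 2)`. The quadratic
factor has discriminant `-7`, so by Vieta its roots are `-1/2 ± (√7/2) i`, which together with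
the double root `0` exhaust the roots.
-/

abbrev Q₁ : Matrix (Fin 4) (Fin 4) ℂ :=
  !![0, -1, -3, 0;
     -1, 2, 9, 0;
     0, -1, -3, -1;
     0, 0, 0, 0]

theorem charpoly_Q₁ : Q₁.charpoly = X ^ 2 * (X ^ 2 + X + 2) := by
  simp [charpoly, charmatrix_apply, det_succ_row_zero, Fin.sum_univ_succ, Fin.succAbove,
    map_ofNat C]
  ring

theorem roots_X_sq_add_X_add_two : (X ^ 2 + X + 2 : ℂ[X]).roots =
    {-(1/2 : ℂ) + (Real.sqrt 7 / 2 : ℝ) * Complex.I,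
      -(1/2 : ℂ) - (Real.sqrt 7 / 2 : ℝ) * Complex.I} := by
  have sqrt_seven_sq : ((Real.sqrt 7 : ℝ) : ℂ) ^ 2 = 7 := by
    rw [← Complex.ofReal_pow, Real.sq_sqrt (by norm_num)]
    norm_num
  rw [show (X ^ 2 + X + 2 : ℂ[X]) = C 1 * X ^ 2 + C 1 * X + C 2 by simp [map_ofNat C],
    roots_quadratic_eq_pair_iff_of_ne_zero one_ne_zero]
  constructor
  · ring
  · push_cast
    linear_combination Complex.I ^ 2 / 4 * sqrt_seven_sq + 7 / 4 * Complex.I_sq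

/-- The matrix `Q₁` of Example 2 has characteristic roots exactly
`0, 0, -1/2 + (√7/2)i, -1/2 - (√7/2)i`: a non-simple real eigenvalue and two
non-real eigenvalues. -/
theorem stmt_1 :
    (Matrix.charpoly
      (!![(0:ℂ), -1, -3, 0;
          -1, 2, 9, 0;
          0, -1, -3, -1;
          0, 0, 0, 0])).roots =
      ({0, 0,
        -(1/2 : ℂ) + (Real.sqrt 7 / 2 : ℝ) * Complex.I,
        -(1/2 : ℂ) - (Real.sqrt 7 / 2 : ℝ) * Complex.I} : Multiset ℂ) := by
  have hne : X ^ 2 * (X ^ 2 + X + 2 : ℂ[X]) ≠ 0 := charpoly_Q₁ ▸ (charpoly_monic Q₁).ne_zero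
  rw [charpoly_Q₁, roots_mul hne, roots_X_pow, roots_X_sq_add_X_add_two]
  rfl
end

section
/- The 4×4 real matrix Q₂ = ![![1, -1, 0, 0], ![-1, 2, -1, 1], ![0, -1, 2, 1], ![0, 0, -1, 4]] has eigenvalues exactly 2 + √3, 2 - √3, 3, and 2, each of algebraic multiplicity one; in particular all its eigenvalues are real and simple. -/
open Matrix Polynomial

set_option maxHeartbeats 1600000 in
private lemma my_det_fin_four {R : Type*} [CommRing R] (M : Matrix (Fin 4) (Fin 4) R) :
    M.det =
      M 0 0 * (M 1 1 * (M 2 2 * M 3 3 - M 2 3 * M 3 2)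
        - M 1 2 * (M 2 1 * M 3 3 - M 2 3 * M 3 1)
        + M 1 3 * (M 2 1 * M 3 2 - M 2 2 * M 3 1))
    - M 0 1 * (M 1 0 * (M 2 2 * M 3 3 - M 2 3 * M 3 2)
        - M 1 2 * (M 2 0 * M 3 3 - M 2 3 * M 3 0)
        + M 1 3 * (M 2 0 * M 3 2 - M 2 2 * M 3 0))
    + M 0 2 * (M 1 0 * (M 2 1 * M 3 3 - M 2 3 * M 3 1)
        - M 1 1 * (M 2 0 * M 3 3 - M 2 3 * M 3 0)
        + M 1 3 * (M 2 0 * M 3 1 - M 2 1 * M 3 0))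
    - M 0 3 * (M 1 0 * (M 2 1 * M 3 2 - M 2 2 * M 3 1)
        - M 1 1 * (M 2 0 * M 3 2 - M 2 2 * M 3 0)
        + M 1 2 * (M 2 0 * M 3 1 - M 2 1 * M 3 0)) := by
  simp [Matrix.det_succ_row_zero, Fin.sum_univ_succ,
    show (Fin.succ 2 : Fin 4) = 3 from rfl,
    show Fin.succAbove (1 : Fin 4) (2 : Fin 3) = 3 by decide,
    show Fin.succAbove (2 : Fin 4) (2 : Fin 3) = 3 by decide,
    show Fin.succAbove (3 : Fin 4) (2 : Fin 3) = 2 by decide]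
  ring

/-- The matrix `Q₂` of Example 3 has eigenvalues exactly `2+√3, 2-√3, 3, 2`, each of
algebraic multiplicity one; in particular all eigenvalues are real and simple. -/
theorem stmt_2 :
    (Matrix.charpoly
      (!![(1:ℂ), -1, 0, 0;
          -1, 2, -1, 1;
          0, -1, 2, 1;
          0, 0, -1, 4])).roots =
      ({((2 + Real.sqrt 3 : ℝ) : ℂ), ((2 - Real.sqrt 3 : ℝ) : ℂ), (3 : ℂ), (2 : ℂ)} :
        Multiset ℂ) ∧
    (({((2 + Real.sqrt 3 : ℝ) : ℂ), ((2 - Real.sqrt 3 : ℝ) : ℂ), (3 : ℂ), (2 : ℂ)} :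
        Multiset ℂ)).Nodup := by
  have hsq : Real.sqrt 3 ^ 2 = 3 := Real.sq_sqrt (by norm_num)
  have h1 : (1 : ℝ) < Real.sqrt 3 := by nlinarith [Real.sqrt_nonneg 3]
  have h2 : Real.sqrt 3 < 2 := by nlinarith [Real.sqrt_nonneg 3]
  set s : ℂ := ((Real.sqrt 3 : ℝ) : ℂ) with hsdef
  have hs2 : s ^ 2 = 3 := by
    rw [hsdef, ← Complex.ofReal_pow, hsq, Complex.ofReal_ofNat]
  have hC : (C s) ^ 2 = 3 := by
    rw [← map_pow, hs2]; exact map_ofNat C 3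
  have hchar : (Matrix.charpoly
      (!![(1:ℂ), -1, 0, 0;
          -1, 2, -1, 1;
          0, -1, 2, 1;
          0, 0, -1, 4])) =
      (Multiset.map (fun a => X - C a)
        ({((2 + Real.sqrt 3 : ℝ) : ℂ), ((2 - Real.sqrt 3 : ℝ) : ℂ), (3 : ℂ), (2 : ℂ)} :
          Multiset ℂ)).prod := by
    rw [Matrix.charpoly, my_det_fin_four]
    simp only [Multiset.insert_eq_cons, Multiset.map_cons, Multiset.map_singleton,
      Multiset.prod_cons, Multiset.prod_singleton, Complex.ofReal_add, Complex.ofReal_sub,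
      Complex.ofReal_ofNat, ← hsdef]
    simp only [charmatrix_apply, Matrix.diagonal_apply, Fin.reduceEq, ite_true, ite_false,
      reduceIte, Matrix.of_apply, Matrix.cons_val', Matrix.cons_val_zero, Matrix.cons_val_one,
      Matrix.head_cons, Matrix.cons_val_two, Matrix.cons_val_three, Matrix.tail_cons,
      Matrix.head_fin_const, Matrix.cons_val_fin_one, Matrix.empty_val',
      map_neg, map_zero, map_ofNat, map_add, map_sub, Polynomial.C_1]
    linear_combination (X ^ 2 - 5 * X + 6) * hC
  have hab : ((2 + Real.sqrt 3 : ℝ) : ℂ) ≠ ((2 - Real.sqrt 3 : ℝ) : ℂ) := by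
    rw [ne_eq, Complex.ofReal_inj]; intro h; linarith
  have ha3 : ((2 + Real.sqrt 3 : ℝ) : ℂ) ≠ 3 := by
    rw [show (3:ℂ) = ((3:ℝ):ℂ) by norm_num, ne_eq, Complex.ofReal_inj]; intro h; linarith
  have ha2 : ((2 + Real.sqrt 3 : ℝ) : ℂ) ≠ 2 := by
    rw [show (2:ℂ) = ((2:ℝ):ℂ) by norm_num, ne_eq, Complex.ofReal_inj]; intro h; linarith
  have hb3 : ((2 - Real.sqrt 3 : ℝ) : ℂ) ≠ 3 := by
    rw [show (3:ℂ) = ((3:ℝ):ℂ) by norm_num, ne_eq, Complex.ofReal_inj]; intro h; linarith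
  have hb2 : ((2 - Real.sqrt 3 : ℝ) : ℂ) ≠ 2 := by
    rw [show (2:ℂ) = ((2:ℝ):ℂ) by norm_num, ne_eq, Complex.ofReal_inj]; intro h; linarith
  refine ⟨?_, ?_⟩
  · rw [hchar, Polynomial.roots_multiset_prod_X_sub_C]
  · simp only [Multiset.insert_eq_cons, Multiset.nodup_cons, Multiset.mem_cons,
      Multiset.mem_singleton, Multiset.nodup_singleton, and_true, not_or]
    exact ⟨⟨hab, ha3, ha2⟩, ⟨hb3, hb2⟩, by norm_num⟩
end

section
/- Let λ ∈ ℂ, q : ℤ → ℝ, a ∈ ℤ, and let C : ℤ → ℂ satisfy C(t+2) - 2C(t+1) + C(t) = q(t) - λ·C(t+1) with C(a) = 1, C(a+1) = 1. Then for each k ≥ 1, C(a+k) is a polynomial in λ of degree exactly k-1 with leading coefficient (-1)^(k+1), provided we regard q as fixed constants. -/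
open Polynomial

noncomputable def Pseq (q : ℤ → ℝ) (a : ℤ) : ℕ → Polynomial ℂ
  | 0 => 1
  | 1 => 1
  | (k+2) => (Polynomial.C 2 - Polynomial.X) * Pseq q a (k+1) - Pseq q a k
      + Polynomial.C ((q (a + k) : ℂ))

lemma Pseq_deg (q : ℤ → ℝ) (a : ℤ) :
    ∀ m : ℕ, (Pseq q a (m+1)).degree = m ∧ (Pseq q a (m+1)).leadingCoeff = (-1)^m := by
  intro m
  induction m using Nat.strong_induction_on with
  | _ m ih =>
    match m with
    | 0 => simp [Pseq]
    | (n+1) =>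
      obtain ⟨hd, hl⟩ := ih n (by omega)
      have hneg : (Polynomial.C (2:ℂ) - Polynomial.X) = -(Polynomial.X - Polynomial.C 2) := by
        ring
      have hA : ((Polynomial.C 2 - Polynomial.X : Polynomial ℂ) * Pseq q a (n+1)).degree
          = ((n+1 : ℕ) : WithBot ℕ) := by
        rw [degree_mul, hd, hneg, degree_neg, degree_X_sub_C]
        push_cast
        ring
      have hAl : ((Polynomial.C 2 - Polynomial.X : Polynomial ℂ) * Pseq q a (n+1)).leadingCoeff
          = (-1)^(n+1) := by
        rw [leadingCoeff_mul, hl, hneg, leadingCoeff_neg, (monic_X_sub_C (2:ℂ)).leadingCoeff]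
        ring
      have hB : (-(Pseq q a n) + Polynomial.C ((q (a + n) : ℂ))).degree
          < ((n+1 : ℕ) : WithBot ℕ) := by
        apply lt_of_le_of_lt (degree_add_le _ _)
        rw [degree_neg]
        apply max_lt
        · match n with
          | 0 =>
            simp [Pseq]
          | (k+1) =>
            rw [(ih k (by omega)).1]
            exact_mod_cast (by omega : k < k + 2)
        · apply lt_of_le_of_lt degree_C_le
          exact_mod_cast Nat.succ_pos n
      have hrw : Pseq q a (n+2) =
          ((Polynomial.C 2 - Polynomial.X : Polynomial ℂ) * Pseq q a (n+1))
          + (-(Pseq q a n) + Polynomial.C ((q (a + n) : ℂ))) := by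
        show (Polynomial.C 2 - Polynomial.X) * Pseq q a (n+1) - Pseq q a n
            + Polynomial.C ((q (a + n) : ℂ)) = _
        ring
      constructor
      · rw [hrw, degree_add_eq_left_of_degree_lt (by rw [hA]; exact hB), hA]
      · rw [hrw, add_comm, leadingCoeff_add_of_degree_lt (by rw [hA]; exact hB), hAl]

lemma Pseq_eval (q : ℤ → ℝ) (a : ℤ) (C : ℂ → ℤ → ℂ)
    (hC : ∀ lam t, C lam (t+2) - 2 * C lam (t+1) + C lam t
        = (q t : ℂ) - lam * C lam (t+1))
    (hC0 : ∀ lam, C lam a = 1) (hC1 : ∀ lam, C lam (a+1) = 1) :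
    ∀ k : ℕ, ∀ lam, C lam (a + k) = (Pseq q a k).eval lam := by
  intro k
  induction k using Nat.twoStepInduction with
  | zero => intro lam; simpa [Pseq] using hC0 lam
  | one => intro lam; simpa [Pseq] using hC1 lam
  | more k ih1 ih2 =>
    intro lam
    have h := hC lam (a + k)
    have e1 := ih1 lam
    have e2 := ih2 lam
    rw [show (a + ((k+1:ℕ):ℤ)) = a + k + 1 by push_cast; ring] at e2
    rw [show (a + ((k+2:ℕ):ℤ)) = a + k + 2 by push_cast; ring]
    simp only [Pseq, eval_add, eval_sub, eval_mul, eval_C, eval_X]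
    linear_combination h + (2 - lam) * e2 - e1

/-- Formula (11), uniform case: the second fundamental solution `C` of the
frozen-argument equation satisfies `C(t+2) - 2C(t+1) + C(t) = q(t) - λC(t+1)` with
`C(a) = C(a+1) = 1`; for `k ≥ 1`, `C(a+k)` is a polynomial in `λ` of degree exactly
`k-1` with leading coefficient `(-1)^(k+1)`. -/
theorem stmt_6 (q : ℤ → ℝ) (a : ℤ) (C : ℂ → ℤ → ℂ)
    (hC : ∀ lam t, C lam (t+2) - 2 * C lam (t+1) + C lam t
        = (q t : ℂ) - lam * C lam (t+1))
    (hC0 : ∀ lam, C lam a = 1) (hC1 : ∀ lam, C lam (a+1) = 1) :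
    ∀ k : ℕ, 1 ≤ k → ∃ p : Polynomial ℂ,
      (∀ lam, C lam (a + k) = p.eval lam) ∧
      p.degree = (k - 1 : ℕ) ∧ p.leadingCoeff = (-1) ^ (k+1) := by
  intro k hk
  obtain ⟨m, rfl⟩ : ∃ m, k = m + 1 := ⟨k - 1, by omega⟩
  refine ⟨Pseq q a (m+1), fun lam => Pseq_eval q a C hC hC0 hC1 (m+1) lam, ?_, ?_⟩
  · rw [(Pseq_deg q a m).1]; norm_num
  · rw [(Pseq_deg q a m).2]
    rw [show m + 1 + 1 = m + 2 from rfl, pow_add]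
    norm_num
end

section
/- Let λ ∈ ℂ, q : ℤ → ℝ, a ∈ ℤ, and let S, C : ℤ → ℂ be the solutions of y(t+2) - 2y(t+1) + y(t) = q(t)y(a) - λ y(t+1) with S(a) = 0, S(a+1) = 1, C(a) = 1, C(a+1) = 1. Define the discrete Wronskian φ(t) = (S(t+1) - S(t))·C(t) - S(t)·(C(t+1) - C(t)) = S(t+1)C(t) - S(t)C(t+1). Then φ satisfies φ(t+1) - φ(t) = -q(t)·S(t+1) for all t ∈ ℤ, and φ(a) = 1. -/
/-- Discrete Wronskian identity (Lemma 3, uniform case): for the fundamental solutions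
`S, C` of the frozen-argument equation, `φ(t) = S(t+1)C(t) - S(t)C(t+1)` satisfies
`φ(t+1) - φ(t) = -q(t)·S(t+1)` and `φ(a) = 1`. -/
theorem stmt_7 (q : ℤ → ℝ) (a : ℤ) (lam : ℂ) (S C : ℤ → ℂ)
    (hS : ∀ t : ℤ, S (t+2) - 2 * S (t+1) + S t = (q t : ℂ) * S a - lam * S (t+1))
    (hS0 : S a = 0) (hS1 : S (a+1) = 1)
    (hC : ∀ t : ℤ, C (t+2) - 2 * C (t+1) + C t = (q t : ℂ) * C a - lam * C (t+1))
    (hC0 : C a = 1) (hC1 : C (a+1) = 1) :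
    (∀ t : ℤ,
      (S (t+2) * C (t+1) - S (t+1) * C (t+2)) - (S (t+1) * C t - S t * C (t+1))
        = -(q t : ℂ) * S (t+1)) ∧
    S (a+1) * C a - S a * C (a+1) = 1 := by
  constructor
  · intro t
    linear_combination C (t+1) * hS t - S (t+1) * hC t
      + (q t : ℂ) * C (t+1) * hS0 - (q t : ℂ) * S (t+1) * hC0
  · rw [hS0, hS1, hC0]; ring
end

section
/- Let q : ℝ → ℝ be continuous, a, α ∈ ℝ, λ ∈ ℂ \ {0}. Define S(t) = sin(√λ(t-a))/√λ and C(t) = cos(√λ(t-a)) + ∫_a^t (sin(√λ(t-ξ))/√λ) q(ξ) dξ. Then the function φ(t) = C'(t)S(t) - C(t)S'(t) satisfies φ'(t) = q(t)·S(t) and φ(a) = -1; consequently φ(t) = -1 + ∫_a^t q(ξ)·(sin(√λ(ξ-a))/√λ) dξ. -/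
open Complex intervalIntegral

lemma hd_lin (ρ a : ℂ) (t : ℝ) :
    HasDerivAt (fun s : ℝ => ρ * ((s : ℂ) - a)) ρ t := by
  have h : HasDerivAt (fun z : ℂ => ρ * (z - a)) ρ (t : ℂ) := by
    simpa using ((hasDerivAt_id (t : ℂ)).sub_const a).const_mul ρ
  exact h.comp_ofReal

lemma hd_sin (ρ a : ℂ) (t : ℝ) :
    HasDerivAt (fun s : ℝ => Complex.sin (ρ * ((s : ℂ) - a)))
      (ρ * Complex.cos (ρ * ((t : ℂ) - a))) t := by
  have := (Complex.hasDerivAt_sin (ρ * ((t : ℂ) - a))).comp (t:ℝ) (hd_lin ρ a t)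
  rw [mul_comm ρ]
  exact this

lemma hd_cos (ρ a : ℂ) (t : ℝ) :
    HasDerivAt (fun s : ℝ => Complex.cos (ρ * ((s : ℂ) - a)))
      (-(ρ * Complex.sin (ρ * ((t : ℂ) - a)))) t := by
  have := (Complex.hasDerivAt_cos (ρ * ((t : ℂ) - a))).comp (t:ℝ) (hd_lin ρ a t)
  rw [show -(ρ * Complex.sin (ρ * ((t : ℂ) - a))) = -Complex.sin (ρ * ((t : ℂ) - a)) * ρ by ring]
  exact this

lemma hd_sin0 (ρ : ℂ) (t : ℝ) :
    HasDerivAt (fun s : ℝ => Complex.sin (ρ * (s : ℂ))) (ρ * Complex.cos (ρ * (t : ℂ))) t := by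
  simpa using hd_sin ρ 0 t

lemma hd_cos0 (ρ : ℂ) (t : ℝ) :
    HasDerivAt (fun s : ℝ => Complex.cos (ρ * (s : ℂ))) (-(ρ * Complex.sin (ρ * (t : ℂ)))) t := by
  simpa using hd_cos ρ 0 t

/-- Continuous version of the Wronskian lemma: for the fundamental solutions
`S(t) = sin(ρ(t-a))/ρ` and `C(t) = cos(ρ(t-a)) + ∫_a^t sin(ρ(t-ξ))/ρ · q(ξ) dξ` of the
frozen-argument equation, `φ = C'S - CS'` satisfies `φ' = q·S`, `φ(a) = -1`, and hence
`φ(t) = -1 + ∫_a^t q(ξ)·sin(ρ(ξ-a))/ρ dξ`. -/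
theorem stmt_11 (q : ℝ → ℝ) (hq : Continuous q) (a α : ℝ) (lam ρ : ℂ)
    (hlam : lam ≠ 0) (hρ : ρ ^ 2 = lam)
    (S C φ : ℝ → ℂ)
    (hSdef : ∀ t : ℝ, S t = Complex.sin (ρ * ((t : ℂ) - (a : ℂ))) / ρ)
    (hCdef : ∀ t : ℝ, C t = Complex.cos (ρ * ((t : ℂ) - (a : ℂ)))
      + ∫ ξ in a..t, (Complex.sin (ρ * ((t : ℂ) - (ξ : ℂ))) / ρ) * (q ξ : ℂ))
    (hφdef : ∀ t : ℝ, φ t = deriv C t * S t - C t * deriv S t) :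
    (∀ t : ℝ, deriv φ t = (q t : ℂ) * S t) ∧
    φ a = -1 ∧
    (∀ t : ℝ, φ t = -1 + ∫ ξ in a..t, (q ξ : ℂ) *
      (Complex.sin (ρ * ((ξ : ℂ) - (a : ℂ))) / ρ)) := by
  have hρ0 : ρ ≠ 0 := by
    intro h; exact hlam (by rw [← hρ, h]; ring)
  -- auxiliary integrals
  set u : ℝ → ℂ := fun t => ∫ ξ in a..t, Complex.cos (ρ * (ξ : ℂ)) * (q ξ : ℂ) with hu_def
  set v : ℝ → ℂ := fun t => ∫ ξ in a..t, Complex.sin (ρ * (ξ : ℂ)) * (q ξ : ℂ) with hv_def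
  have hcu : Continuous fun ξ : ℝ => Complex.cos (ρ * (ξ : ℂ)) * (q ξ : ℂ) := by
    fun_prop
  have hcv : Continuous fun ξ : ℝ => Complex.sin (ρ * (ξ : ℂ)) * (q ξ : ℂ) := by
    fun_prop
  have hu : ∀ t : ℝ, HasDerivAt u (Complex.cos (ρ * (t : ℂ)) * (q t : ℂ)) t :=
    fun t => (hcu.integral_hasStrictDerivAt a t).hasDerivAt
  have hv : ∀ t : ℝ, HasDerivAt v (Complex.sin (ρ * (t : ℂ)) * (q t : ℂ)) t :=
    fun t => (hcv.integral_hasStrictDerivAt a t).hasDerivAt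
  -- explicit formula for C
  have hC : ∀ t : ℝ, C t = Complex.cos (ρ * ((t : ℂ) - a))
      + (Complex.sin (ρ * (t : ℂ)) / ρ) * u t - (Complex.cos (ρ * (t : ℂ)) / ρ) * v t := by
    intro t
    rw [hCdef t]
    have h1 : ∀ ξ : ℝ, (Complex.sin (ρ * ((t : ℂ) - (ξ : ℂ))) / ρ) * (q ξ : ℂ)
        = (Complex.sin (ρ * (t : ℂ)) / ρ) * (Complex.cos (ρ * (ξ : ℂ)) * (q ξ : ℂ))
          - (Complex.cos (ρ * (t : ℂ)) / ρ) * (Complex.sin (ρ * (ξ : ℂ)) * (q ξ : ℂ)) := by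
      intro ξ
      have : ρ * ((t : ℂ) - (ξ : ℂ)) = ρ * (t : ℂ) - ρ * (ξ : ℂ) := by ring
      rw [this, Complex.sin_sub]; field_simp
    rw [intervalIntegral.integral_congr (g := fun ξ : ℝ =>
        (Complex.sin (ρ * (t : ℂ)) / ρ) * (Complex.cos (ρ * (ξ : ℂ)) * (q ξ : ℂ))
        - (Complex.cos (ρ * (t : ℂ)) / ρ) * (Complex.sin (ρ * (ξ : ℂ)) * (q ξ : ℂ)))
        (fun ξ _ => h1 ξ)]
    rw [intervalIntegral.integral_sub ((hcu.intervalIntegrable a t).const_mul _)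
        ((hcv.intervalIntegrable a t).const_mul _),
      intervalIntegral.integral_const_mul, intervalIntegral.integral_const_mul]
    ring
  have hCfun : C = fun t : ℝ => Complex.cos (ρ * ((t : ℂ) - a))
      + (Complex.sin (ρ * (t : ℂ)) / ρ) * u t - (Complex.cos (ρ * (t : ℂ)) / ρ) * v t :=
    funext hC
  -- derivative of S
  have hS' : ∀ t : ℝ, HasDerivAt S (Complex.cos (ρ * ((t : ℂ) - a))) t := by
    intro t
    have : HasDerivAt (fun s : ℝ => Complex.sin (ρ * ((s : ℂ) - a)) / ρ)
        (ρ * Complex.cos (ρ * ((t : ℂ) - a)) / ρ) t := (hd_sin ρ a t).div_const ρ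
    rw [funext hSdef]
    convert this using 1
    field_simp
  -- derivative of C
  have hC' : ∀ t : ℝ, HasDerivAt C (-(ρ * Complex.sin (ρ * ((t : ℂ) - a)))
      + Complex.cos (ρ * (t : ℂ)) * u t + Complex.sin (ρ * (t : ℂ)) * v t) t := by
    intro t
    rw [hCfun]
    have h1 := (hd_cos ρ a t)
    have h2 := (((hd_sin0 ρ t).div_const ρ).mul (hu t))
    have h3 := (((hd_cos0 ρ t).div_const ρ).mul (hv t))
    have := (h1.add h2).sub h3
    refine this.congr_deriv (Eq.symm ?_)
    field_simp
    ring
  -- second derivative of C (derivative of the explicit C')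
  have hC'' : ∀ t : ℝ, HasDerivAt (fun s : ℝ => -(ρ * Complex.sin (ρ * ((s : ℂ) - a)))
        + Complex.cos (ρ * (s : ℂ)) * u s + Complex.sin (ρ * (s : ℂ)) * v s)
      (-(ρ * (ρ * Complex.cos (ρ * ((t : ℂ) - a))))
        + (-(ρ * Complex.sin (ρ * (t : ℂ))) * u t
            + Complex.cos (ρ * (t : ℂ)) * (Complex.cos (ρ * (t : ℂ)) * (q t : ℂ)))
        + (ρ * Complex.cos (ρ * (t : ℂ)) * v t
            + Complex.sin (ρ * (t : ℂ)) * (Complex.sin (ρ * (t : ℂ)) * (q t : ℂ)))) t := by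
    intro t
    have h1 := (hd_sin ρ a t).const_mul ρ |>.neg
    have h2 := ((hd_cos0 ρ t).mul (hu t))
    have h3 := ((hd_sin0 ρ t).mul (hv t))
    exact (h1.add h2).add h3
  -- φ equals explicit function
  have hφfun : φ = fun t : ℝ =>
      (-(ρ * Complex.sin (ρ * ((t : ℂ) - a))) + Complex.cos (ρ * (t : ℂ)) * u t
        + Complex.sin (ρ * (t : ℂ)) * v t) * S t
      - C t * Complex.cos (ρ * ((t : ℂ) - a)) := by
    funext t
    rw [hφdef t, (hC' t).deriv, (hS' t).deriv]
  -- derivative of φ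
  have hφ' : ∀ t : ℝ, HasDerivAt φ ((q t : ℂ) * S t) t := by
    intro t
    rw [hφfun]
    have hSd : HasDerivAt S (Complex.cos (ρ * ((t : ℂ) - a))) t := hS' t
    have hCd := hC' t
    have h1 := (hC'' t).mul hSd
    have h2 := hCd.mul (hd_cos ρ a t)
    have := h1.sub h2
    refine this.congr_deriv (Eq.symm ?_)
    rw [hSdef t, hC t]
    have pyth := Complex.sin_sq_add_cos_sq (ρ * (t : ℂ))
    field_simp
    linear_combination (-(q t : ℂ) * Complex.sin (ρ * ((t:ℂ) - a))) * pyth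
  refine ⟨fun t => (hφ' t).deriv, ?_, ?_⟩
  · rw [hφdef a, (hC' a).deriv, (hS' a).deriv, hSdef a, hC a]
    simp [hu_def, hv_def]
  · intro t
    have hScont : Continuous S := by
      rw [funext hSdef]; fun_prop
    have hint : IntervalIntegrable (fun ξ : ℝ => (q ξ : ℂ) * S ξ) MeasureTheory.volume a t :=
      (Continuous.mul (by fun_prop) hScont).intervalIntegrable a t
    have := intervalIntegral.integral_eq_sub_of_hasDerivAt
      (f := φ) (f' := fun ξ : ℝ => (q ξ : ℂ) * S ξ) (fun x _ => hφ' x) hint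
    have hφa : φ a = -1 := by
      rw [hφdef a, (hC' a).deriv, (hS' a).deriv, hSdef a, hC a]
      simp [hu_def, hv_def]
    have heq : (∫ ξ in a..t, (q ξ : ℂ) * (Complex.sin (ρ * ((ξ : ℂ) - a)) / ρ))
        = ∫ ξ in a..t, (q ξ : ℂ) * S ξ := by
      refine intervalIntegral.integral_congr fun ξ _ => ?_
      rw [hSdef ξ]
    rw [heq, this, hφa]; ring
end

section
/- Let λ ∈ ℂ and let a, μ₀, μ₁, ... be positive reals (step sizes). Define the grid points t₀ = a, t_{j+1} = t_j + μ_j, and let S be the solution on these grid points of S^{ΔΔ}(t_j) + λ S(t_{j+1}) = 0, where S^Δ(t_j) = (S(t_{j+1}) - S(t_j))/μ_j, with S(t₀) = 0, S^Δ(t₀) = 1. Then for each j ≥ 2, S(t_j) is a polynomial in λ of degree j-1 with leading coefficient (-1)^{j+1}·(μ₀ μ₁ ⋯ μ_{j-2})²·μ_{j-1}. -/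
open Polynomial

noncomputable def PolS (μ : ℕ → ℝ) : ℕ → Polynomial ℂ
  | 0 => 0
  | 1 => C (μ 0 : ℂ)
  | (j+2) => PolS μ (j+1) + C ((μ (j+1) : ℂ)) *
      (C ((μ j : ℂ))⁻¹ * (PolS μ (j+1) - PolS μ j) - C ((μ j : ℂ)) * X * PolS μ (j+1))

/-- Formula (9) of Lemma 2 on a general discrete time scale: with grid points
`t₀ = a`, `t_{j+1} = t_j + μ_j` and the Δ-difference equation
`S^{ΔΔ}(t_j) + λ S(t_{j+1}) = 0`, `S(t₀) = 0`, `S^Δ(t₀) = 1`, the value `S(t_j)` for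
`j ≥ 2` is a polynomial in `λ` of degree `j-1` with leading coefficient
`(-1)^{j+1}·(μ₀μ₁⋯μ_{j-2})²·μ_{j-1}`. -/
theorem stmt_15 (a : ℝ) (μ : ℕ → ℝ) (hμ : ∀ j, 0 < μ j)
    (S : ℂ → ℕ → ℂ)
    (heq : ∀ lam : ℂ, ∀ j : ℕ,
      ((S lam (j+2) - S lam (j+1)) / (μ (j+1) : ℂ)
        - (S lam (j+1) - S lam j) / (μ j : ℂ)) / (μ j : ℂ)
        + lam * S lam (j+1) = 0)
    (hS0 : ∀ lam, S lam 0 = 0)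
    (hS1 : ∀ lam, (S lam 1 - S lam 0) / (μ 0 : ℂ) = 1) :
    ∀ j : ℕ, 2 ≤ j → ∃ p : Polynomial ℂ,
      (∀ lam, S lam j = p.eval lam) ∧
      p.degree = (j - 1 : ℕ) ∧
      p.leadingCoeff = (-1) ^ (j+1) * ((∏ i ∈ Finset.range (j-1), (μ i : ℂ)) ^ 2)
        * (μ (j-1) : ℂ) := by
  have hμC : ∀ j, (μ j : ℂ) ≠ 0 := fun j => by
    exact_mod_cast Complex.ofReal_ne_zero.mpr (hμ j).ne'
  -- evaluation
  have ev : ∀ lam j, S lam j = (PolS μ j).eval lam := by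
    intro lam j
    induction j using Nat.twoStepInduction with
    | zero => simpa [PolS] using hS0 lam
    | one =>
      have h := hS1 lam
      rw [hS0 lam] at h
      field_simp [hμC 0] at h
      simpa [PolS] using h
    | more j ih1 ih2 =>
      have h := heq lam j
      field_simp [hμC j, hμC (j+1)] at h
      simp only [PolS, eval_add, eval_mul, eval_sub, eval_C, eval_X, eval_mul]
      rw [← ih1, ← ih2]
      field_simp [hμC j]
      linear_combination h
  -- degree and leading coefficient
  have deg : ∀ j : ℕ, (PolS μ (j+1)).degree = j ∧
      (PolS μ (j+1)).leadingCoeff = (-1) ^ (j+2) *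
        ((∏ i ∈ Finset.range j, (μ i : ℂ)) ^ 2) * (μ j : ℂ) ∧
      (PolS μ j).degree ≤ j := by
    intro j
    induction j with
    | zero =>
      refine ⟨?_, ?_, ?_⟩
      · simp [PolS, degree_C (hμC 0)]
      · simp [PolS, leadingCoeff_C]
      · simp [PolS]
    | succ j ih =>
      obtain ⟨hd, hl, hb⟩ := ih
      set A : Polynomial ℂ := PolS μ (j+1) +
        C ((μ (j+1) : ℂ)) * C ((μ j : ℂ))⁻¹ * (PolS μ (j+1) - PolS μ j) with hA
      set B : Polynomial ℂ := -(C ((μ j : ℂ) * (μ (j+1) : ℂ)) * (X * PolS μ (j+1))) with hB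
      have hsplit : PolS μ (j+2) = A + B := by
        show PolS μ (j+1) + C ((μ (j+1) : ℂ)) *
          (C ((μ j : ℂ))⁻¹ * (PolS μ (j+1) - PolS μ j)
            - C ((μ j : ℂ)) * X * PolS μ (j+1)) = A + B
        rw [hA, hB, map_mul]
        ring
      have hne : PolS μ (j+1) ≠ 0 := by
        intro h0
        rw [h0] at hd
        simp at hd
      have hdB : B.degree = (j + 1 : ℕ) := by
        rw [hB, degree_neg, degree_mul, degree_mul, hd, degree_C (by
          exact mul_ne_zero (hμC j) (hμC (j+1))), degree_X]
        push_cast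
        ring
      have hdA : A.degree ≤ (j : ℕ) := by
        rw [hA]
        refine le_trans (degree_add_le _ _) (max_le (le_of_eq hd) ?_)
        refine le_trans (degree_mul_le _ _) ?_
        have h1 : (C ((μ (j+1) : ℂ)) * C ((μ j : ℂ))⁻¹).degree ≤ 0 := by
          exact le_trans (degree_mul_le _ _)
            (le_trans (add_le_add degree_C_le degree_C_le) (by simp))
        have h2 : (PolS μ (j+1) - PolS μ j).degree ≤ (j : ℕ) :=
          le_trans (degree_sub_le _ _) (max_le (le_of_eq hd) hb)
        calc (C ((μ (j+1) : ℂ)) * C ((μ j : ℂ))⁻¹).degree + (PolS μ (j+1) - PolS μ j).degree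
            ≤ 0 + (j : WithBot ℕ) := add_le_add h1 h2
          _ = (j : WithBot ℕ) := by simp
      have hlt : A.degree < B.degree := by
        rw [hdB]
        exact lt_of_le_of_lt hdA (by exact_mod_cast WithBot.coe_lt_coe.mpr (Nat.lt_succ_self j))
      refine ⟨?_, ?_, ?_⟩
      · rw [hsplit, degree_add_eq_right_of_degree_lt hlt, hdB]
      · rw [hsplit, leadingCoeff_add_of_degree_lt hlt, hB, leadingCoeff_neg,
          leadingCoeff_mul, leadingCoeff_mul, leadingCoeff_C, leadingCoeff_X, hl,
          Finset.prod_range_succ]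
        ring
      · rw [hd]; exact_mod_cast Nat.le_succ j
  intro j hj
  obtain ⟨k, rfl⟩ : ∃ k, j = k + 2 := ⟨j - 2, by omega⟩
  obtain ⟨hd, hl, -⟩ := deg (k + 1)
  refine ⟨PolS μ (k+2), fun lam => ev lam (k+2), ?_, ?_⟩
  · simpa using hd
  · simpa using hl
end

section
/- Let λ ∈ ℂ and let C : ℤ → ℂ satisfy C(t+2) = (2-λ)C(t+1) - C(t) + q(t) with C(a) = 1, C(a+1) = 1 (uniform step). Then for the backward direction, for each k ≥ 2, C(a-k) is a polynomial in λ of degree exactly k with leading coefficient (-1)^k. -/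
open Polynomial

noncomputable def myP (q : ℤ → ℝ) (a : ℤ) : ℕ → Polynomial ℂ
  | 0 => 1
  | 1 => Polynomial.C (1 + (q (a-1) : ℂ)) - Polynomial.X
  | (k+2) => (Polynomial.C 2 - Polynomial.X) * myP q a (k+1) - myP q a k
      + Polynomial.C ((q (a - (k+2)) : ℂ))

lemma myP_degle (q : ℤ → ℝ) (a : ℤ) : ∀ k, (myP q a k).degree ≤ k := by
  have H : ∀ k, (myP q a k).degree ≤ k ∧ (myP q a (k+1)).degree ≤ (k+1 : ℕ) := by
    intro k
    induction k with
    | zero =>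
      constructor
      · simp [myP]
      · refine le_trans (degree_sub_le _ _) (max_le (le_trans degree_C_le ?_) ?_)
        · exact_mod_cast Nat.zero_le 1
        · rw [degree_X]; exact_mod_cast le_refl 1
    | succ k ih =>
      refine ⟨ih.2, ?_⟩
      show ((Polynomial.C 2 - Polynomial.X) * myP q a (k+1) - myP q a k
          + Polynomial.C ((q (a - (k+2)) : ℂ))).degree ≤ ((k+2 : ℕ) : WithBot ℕ)
      refine le_trans (degree_add_le _ _) (max_le ?_ (le_trans degree_C_le (by exact_mod_cast Nat.zero_le (k+2))))
      refine le_trans (degree_sub_le _ _) (max_le ?_ (le_trans ih.1 ?_))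
      · refine le_trans (degree_mul_le _ _) ?_
        have h1 : (Polynomial.C 2 - Polynomial.X : Polynomial ℂ).degree ≤ 1 :=
          le_trans (degree_sub_le _ _) (by simp [degree_X, le_trans degree_C_le])
        calc (Polynomial.C 2 - Polynomial.X : Polynomial ℂ).degree + (myP q a (k+1)).degree
            ≤ (1 : ℕ) + ((k+1 : ℕ) : WithBot ℕ) := add_le_add h1 ih.2
          _ = ((k+2 : ℕ) : WithBot ℕ) := by
              norm_cast; omega
      · exact_mod_cast WithBot.coe_le_coe.2 (by omega)
  exact fun k => (H k).1

lemma myP_coeff (q : ℤ → ℝ) (a : ℤ) : ∀ k, (myP q a (k+1)).coeff (k+1) = (-1) ^ (k+1) := by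
  intro k
  induction k with
  | zero => simp [myP, coeff_one]
  | succ k ih =>
    show ((Polynomial.C 2 - Polynomial.X) * myP q a (k+1) - myP q a k
        + Polynomial.C ((q (a - (k+2)) : ℂ))).coeff (k+2) = _
    have h1 : (myP q a (k+1)).coeff (k+2) = 0 :=
      coeff_eq_zero_of_degree_lt (lt_of_le_of_lt (myP_degle q a (k+1))
        (by exact_mod_cast Nat.lt_succ_self (k+1)))
    have h2 : (myP q a k).coeff (k+2) = 0 :=
      coeff_eq_zero_of_degree_lt (lt_of_le_of_lt (myP_degle q a k)
        (by exact_mod_cast Nat.lt_add_of_pos_right (by omega)))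
    rw [coeff_add, coeff_sub, sub_mul, coeff_sub, coeff_C_mul, h1,
      coeff_X_mul, ih, h2, coeff_C]
    simp [pow_succ]
  
/-- Formula (12), uniform discrete case: the backward values of the fundamental
solution `C` (with `C(a) = C(a+1) = 1`) of
`C(t+2) = (2-λ)C(t+1) - C(t) + q(t)` are polynomials in `λ`: for `k ≥ 2`, `C(a-k)` has
degree exactly `k` and leading coefficient `(-1)^k` — one full power of `λ` more than
the forward values at the same distance. -/
theorem stmt_18 (q : ℤ → ℝ) (a : ℤ) (C : ℂ → ℤ → ℂ)
    (hC : ∀ lam t, C lam (t+2) = (2 - lam) * C lam (t+1) - C lam t + (q t : ℂ))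
    (hC0 : ∀ lam, C lam a = 1) (hC1 : ∀ lam, C lam (a+1) = 1) :
    ∀ k : ℕ, 2 ≤ k → ∃ p : Polynomial ℂ,
      (∀ lam, C lam (a - k) = p.eval lam) ∧
      p.degree = (k : ℕ) ∧ p.leadingCoeff = (-1) ^ k := by
  have heval : ∀ (k : ℕ) (lam : ℂ), C lam (a - k) = (myP q a k).eval lam := by
    have H : ∀ k : ℕ, (∀ lam, C lam (a - k) = (myP q a k).eval lam)
        ∧ (∀ lam, C lam (a - (k+1 : ℕ)) = (myP q a (k+1)).eval lam) := by
      intro k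
      induction k with
      | zero =>
        constructor
        · intro lam; simpa [myP] using hC0 lam
        · intro lam
          have h := hC lam (a - 1)
          have e1 : a - 1 + 2 = a + 1 := by ring
          have e2 : a - 1 + 1 = a := by ring
          rw [e1, e2, hC0, hC1] at h
          have : C lam (a - 1) = (2 - lam) * 1 - 1 + (q (a-1) : ℂ) := by
            linear_combination h
          simpa [myP, this] using by push_cast; ring
      | succ k ih =>
        refine ⟨ih.2, ?_⟩
        intro lam
        have h := hC lam (a - (k+2 : ℕ))
        have e1 : a - ((k : ℕ)+2 : ℤ) + 2 = a - (k : ℕ) := by ring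
        have e2 : a - ((k : ℕ)+2 : ℤ) + 1 = a - ((k:ℕ)+1 : ℤ) := by ring
        push_cast at h ⊢
        rw [e1, e2] at h
        have hk := ih.1 lam
        have hk1 := ih.2 lam
        push_cast at hk hk1
        rw [hk, hk1] at h
        have : C lam (a - ((k:ℕ) + 2)) = (2 - lam) * (myP q a (k+1)).eval lam
            - (myP q a k).eval lam + (q (a - ((k:ℕ)+2)) : ℂ) := by
          linear_combination h
        have e3 : a - ((k:ℤ) + 1 + 1) = a - ((k:ℤ) + 2) := by ring
        rw [e3, this]
        show _ = ((Polynomial.C 2 - Polynomial.X) * myP q a (k+1) - myP q a k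
          + Polynomial.C ((q (a - (k+2)) : ℂ))).eval lam
        push_cast
        simp [eval_mul, eval_sub, eval_add]
    exact fun k => (H k).1
  intro k hk
  obtain ⟨k', rfl⟩ : ∃ k', k = k' + 1 := ⟨k - 1, by omega⟩
  refine ⟨myP q a (k'+1), fun lam => heval _ lam, ?_, ?_⟩
  · exact le_antisymm (myP_degle q a (k'+1))
      (le_degree_of_ne_zero (by rw [myP_coeff]; exact pow_ne_zero _ (by norm_num)))
  · have hdeg : (myP q a (k'+1)).natDegree = k' + 1 :=
      natDegree_eq_of_degree_eq_some (le_antisymm (myP_degle q a (k'+1))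
        (le_degree_of_ne_zero (by rw [myP_coeff]; exact pow_ne_zero _ (by norm_num))))
    rw [leadingCoeff, hdeg, myP_coeff]
end
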